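/- For A = J1 (an element of sp(1)), the Ricci tensor Ric_A(y,z) := Tr{x ↦ R_A(x,y)z} of the curvature operator R_A equals 4nκ ω(J1 y, z) = -4nκ g_1(y,z). -/

import Mathlib

/-! The trace of a rank-one map `x ↦ f x • v` is `f v`, so `Tr (x ↦ R_A(x, y) z)` is an explicit
combination of values of `ω`, the traces `Tr Jₐ` and `Tr (Jₐ A)`, and `ω(y, S z)`, `ω(S y, z)` for
`S = Σₐ Jₐ A Jₐ` (moving `Jₐ` across `ω` uses `Jₐ² = -1` and hermiticity). For `A = J₁` the
quaternion relations make each `Jₐ` a commutator up to sign, so `Tr Jₐ = 0`; moreover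
`Tr (J₁ J₁) = -4n`, `Tr (J₂ J₁) = Tr (J₃ J₁) = 0` and `S = -J₁ + J₁ + J₁ = J₁`. Every remaining term
is then a multiple of `ω(J₁ y, z)`, and the coefficients add up to `4nκ`. -/

/-- The curvature operator R_A(·,y)z as an endomorphism in the first argument x
(see Corollary `curvatureRQom` of the paper); gₐ(u,w) = ω(u, Jₐ w). -/
noncomputable def curvOp {V : Type*} [AddCommGroup V] [Module ℝ V]
    (ω : LinearMap.BilinForm ℝ V) (J : Fin 3 → Module.End ℝ V)
    (A : Module.End ℝ V) (κ : ℝ) (y z : V) : Module.End ℝ V :=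
  κ • ((ω.flip y).smulRight (A z))
  + (κ / 2) • ((ω.flip z).smulRight (A y)
      - ∑ a : Fin 3, (ω.flip (J a z)).smulRight (J a (A y))
      + ω (A y) z • (LinearMap.id : Module.End ℝ V)
      - ∑ a : Fin 3, ω (A y) (J a z) • J a)
  - (κ / 2) • (ω y z • A
      - ∑ a : Fin 3, ω y (J a z) • (J a * A)
      + ((ω.flip z) ∘ₗ (A : V →ₗ[ℝ] V)).smulRight y
      - ∑ a : Fin 3, ((ω.flip (J a z)) ∘ₗ (A : V →ₗ[ℝ] V)).smulRight (J a y))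
  - (κ / 2) • (∑ a : Fin 3,
      ((ω.flip (J a (A y))) - (ω y) ∘ₗ ((J a * A : Module.End ℝ V) : V →ₗ[ℝ] V)).smulRight
        (J a z))

structure IsQuaternionTriple {R : Type*} [Ring R] (i j k : R) : Prop where
  i_mul_i : i * i = -1
  j_mul_j : j * j = -1
  k_mul_k : k * k = -1
  i_mul_j_mul_k : i * j * k = -1

namespace IsQuaternionTriple

variable {R : Type*} [Ring R] {i j k : R}

theorem i_mul_j (h : IsQuaternionTriple i j k) : i * j = k := by
  have := congrArg (· * k) h.i_mul_j_mul_k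
  simpa [mul_assoc, h.k_mul_k] using this

theorem j_mul_k (h : IsQuaternionTriple i j k) : j * k = i := by
  have := congrArg (i * ·) h.i_mul_j_mul_k
  simpa [← mul_assoc, h.i_mul_i] using this

theorem j_mul_i (h : IsQuaternionTriple i j k) : j * i = -k := by
  rw [← h.j_mul_k, ← mul_assoc, h.j_mul_j, neg_one_mul]

theorem cyclic (h : IsQuaternionTriple i j k) : IsQuaternionTriple j k i :=
  ⟨h.j_mul_j, h.k_mul_k, h.i_mul_i, by rw [h.j_mul_k, h.i_mul_i]⟩

theorem sum_mul_i_mul (h : IsQuaternionTriple i j k) : i * i * i + j * i * j + k * i * k = i := by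
  rw [h.i_mul_i, h.j_mul_i, h.cyclic.j_mul_k, neg_mul _ j, h.cyclic.j_mul_i, h.j_mul_k]
  noncomm_ring

end IsQuaternionTriple

theorem LinearMap.trace_eq_zero_of_mul_eq_neg_mul {R M : Type*} [CommRing R] [IsAddTorsionFree R]
    [AddCommGroup M] [Module R M] {f g h : Module.End R M} (hfg : f * g = h) (hgf : g * f = -h) :
    trace R M h = 0 := by
  have := trace_mul_comm R f g
  rw [hfg, hgf, map_neg] at this
  exact self_eq_neg.mp this

theorem IsQuaternionTriple.trace_eq_zero {R M : Type*} [CommRing R] [IsAddTorsionFree R]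
    [AddCommGroup M] [Module R M] {i j k : Module.End R M} (h : IsQuaternionTriple i j k) :
    LinearMap.trace R M i = 0 ∧ LinearMap.trace R M j = 0 ∧ LinearMap.trace R M k = 0 :=
  have trace_k {i j k : Module.End R M} (h : IsQuaternionTriple i j k) :=
    LinearMap.trace_eq_zero_of_mul_eq_neg_mul h.i_mul_j h.j_mul_i
  ⟨trace_k h.cyclic, trace_k h.cyclic.cyclic, trace_k h⟩

theorem LinearMap.BilinForm.apply_map_eq_neg_map_apply {R M : Type*} [CommRing R]
    [AddCommGroup M] [Module R M] (B : LinearMap.BilinForm R M) {J : Module.End R M}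
    (hJ : J * J = -1) (hB : ∀ x y, B (J x) (J y) = B x y) (x y : M) :
    B x (J y) = -B (J x) y := by
  rw [← hB, ← Module.End.mul_apply, hJ]
  simp

section Hermitian

variable {ι V : Type*} [Fintype ι] [AddCommGroup V] [Module ℝ V]
  {ω : LinearMap.BilinForm ℝ V} {J : ι → Module.End ℝ V}

theorem sum_apply_map_map (hherm : ∀ a x y, ω (J a x) (J a y) = ω x y) (u v : V) :
    ∑ a, ω (J a u) (J a v) = Fintype.card ι * ω u v := by
  simp [hherm]

theorem sum_apply_comp_map (hJsq : ∀ a, J a * J a = -1)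
    (hherm : ∀ a x y, ω (J a x) (J a y) = ω x y) (A : Module.End ℝ V) (y z : V) :
    ∑ a, ω (A (J a y)) (J a z) = -ω ((∑ a, J a * A * J a) y) z := by
  simp [ω.apply_map_eq_neg_map_apply (hJsq _) (hherm _) _ z, LinearMap.sum_apply]

end Hermitian

theorem trace_curvOp {V : Type*} [AddCommGroup V] [Module ℝ V] [FiniteDimensional ℝ V]
    (ω : LinearMap.BilinForm ℝ V) (J : Fin 3 → Module.End ℝ V) (A : Module.End ℝ V)
    (κ : ℝ) (y z : V) :
    LinearMap.trace ℝ V (curvOp ω J A κ y z) =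
      κ * ω (A z) y
      + κ / 2 * (ω (A y) z - ∑ a, ω (J a (A y)) (J a z)
          + Module.finrank ℝ V * ω (A y) z - ∑ a, ω (A y) (J a z) * LinearMap.trace ℝ V (J a))
      - κ / 2 * (ω y z * LinearMap.trace ℝ V A - ∑ a, ω y (J a z) * LinearMap.trace ℝ V (J a * A)
          + ω (A y) z - ∑ a, ω (A (J a y)) (J a z))
      - κ / 2 * (∑ a, ω (J a z) (J a (A y)) - ω y ((∑ a, J a * A * J a) z)) := by
  simp only [curvOp, map_add, map_sub, map_smul, map_sum, LinearMap.trace_smulRight,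
    LinearMap.trace_id, smul_eq_mul, LinearMap.BilinForm.flip_apply, LinearMap.comp_apply,
    LinearMap.sub_apply, Module.End.mul_apply, LinearMap.sum_apply, Finset.sum_sub_distrib]
  ring

theorem stmt9_general (V : Type*) [AddCommGroup V] [Module ℝ V] [FiniteDimensional ℝ V]
    (n : ℕ) (hdim : Module.finrank ℝ V = 4 * n)
    (J : Fin 3 → Module.End ℝ V)
    (hJsq : ∀ a, J a * J a = -1)
    (hJJJ : J 0 * J 1 * J 2 = -1)
    (ω : LinearMap.BilinForm ℝ V)
    (hskew : ∀ x y, ω x y = - ω y x)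
    (hherm : ∀ (a : Fin 3) x y, ω (J a x) (J a y) = ω x y)
    (κ : ℝ) :
    ∀ y z : V,
      LinearMap.trace ℝ V (curvOp ω J (J 0) κ y z) = 4 * (n : ℝ) * κ * ω (J 0 y) z ∧
      4 * (n : ℝ) * κ * ω (J 0 y) z = -(4 * (n : ℝ) * κ) * ω y (J 0 z) := by
  have hJ : IsQuaternionTriple (J 0) (J 1) (J 2) := ⟨hJsq 0, hJsq 1, hJsq 2, hJJJ⟩
  have hJω (a : Fin 3) : ∀ u v, ω u (J a v) = -ω (J a u) v :=
    ω.apply_map_eq_neg_map_apply (hJsq a) (hherm a)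
  have hsandwich : ∑ a, J a * J 0 * J a = J 0 := by
    rw [Fin.sum_univ_three]
    exact hJ.sum_mul_i_mul
  have htrace (a : Fin 3) : LinearMap.trace ℝ V (J a) = 0 := by
    fin_cases a
    exacts [hJ.trace_eq_zero.1, hJ.trace_eq_zero.2.1, hJ.trace_eq_zero.2.2]
  intro y z
  have hyz : ω (J 0 z) y = ω (J 0 y) z := by rw [hskew, hJω, neg_neg]
  have htrace_mul : ∑ a, ω y (J a z) * LinearMap.trace ℝ V (J a * J 0) =
      Module.finrank ℝ V * ω (J 0 y) z := by
    rw [Fin.sum_univ_three, hJsq, hJ.j_mul_i, hJ.cyclic.j_mul_k, map_neg, map_neg,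
      LinearMap.trace_one, htrace, htrace, hJω]
    ring
  refine ⟨?_, by rw [hJω]; ring⟩
  rw [trace_curvOp, sum_apply_map_map hherm, sum_apply_map_map hherm,
    sum_apply_comp_map hJsq hherm, hsandwich, htrace_mul, hJω 0 z, hJω 0 y, hyz, hdim]
  simp only [htrace, mul_zero, Finset.sum_const_zero, Fintype.card_fin]
  push_cast
  ring

theorem stmt9 (V : Type*) [AddCommGroup V] [Module ℝ V] [FiniteDimensional ℝ V]
    (n : ℕ) (hdim : Module.finrank ℝ V = 4 * n)
    (J : Fin 3 → Module.End ℝ V)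
    (hJsq : ∀ a, J a * J a = -1)
    (hJJJ : J 0 * J 1 * J 2 = -1)
    (ω : LinearMap.BilinForm ℝ V)
    (hskew : ∀ x y, ω x y = - ω y x)
    (hnd : ∀ x, (∀ y, ω x y = 0) → x = 0)
    (hherm : ∀ (a : Fin 3) x y, ω (J a x) (J a y) = ω x y)
    (κ : ℝ) (hκ : κ ≠ 0) :
    ∀ y z : V,
      LinearMap.trace ℝ V (curvOp ω J (J 0) κ y z) = 4 * (n : ℝ) * κ * ω (J 0 y) z ∧
      4 * (n : ℝ) * κ * ω (J 0 y) z = -(4 * (n : ℝ) * κ) * ω y (J 0 z) :=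
  stmt9_general V n hdim J hJsq hJJJ ω hskew hherm κ
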